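/- arXiv:1210.6893 — 2 statements merged into one kernel-verified Lean document; each statement's English description precedes it below -/
import Mathlib

section
/- Let 𝒜 and ℬ be two finite σ-structures. The following are equivalent: (i) every {∃,∀,∧,∨}-FO sentence true in 𝒜 is true in ℬ; (ii) there exists a surjective hyper-morphism from 𝒜 to ℬ. -/
/-!
Positive equality-free sentences are preserved by surjective hyper-morphisms: nonempty images
transport witnesses of `∃` from `𝒜` to `ℬ`, surjectivity lets every `b ∈ B` be handled by some
instance of a `∀` in `𝒜`, and atoms are preserved by definition.

Conversely, if no atom holds in `𝒜` then `a ↦ B` is a surjective hyper-morphism. Otherwise, with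
`k = |B|`, consider the sentence
  `∀ y₁ … y_k ∃ (x_a)_{a ∈ A}, ⋁_{g : Fin k → A} Δ(g)`,
where `Δ(g)` is the conjunction of all atoms true in `𝒜` under the valuation `ρ_g : y_j ↦ g j,
x_a ↦ a`. It holds in `𝒜` (take `x_a := a` and `g := y`). If it holds in `ℬ`, instantiate the
`y_j` by an enumeration of `B`; the witnesses `x_a` and the true disjunct `g` give a valuation
`τ` in `ℬ` such that every atom true under `ρ_g` is true under `τ`. Both valuations are onto, so
`a ↦ τ (ρ_g⁻¹ {a})` is a surjective hyper-morphism.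
-/

namespace MC

/-- Which logical symbols (beyond ∃, ∧ and relational atoms) are allowed. -/
structure Frag where
  eq : Bool
  ne : Bool
  neg : Bool
  orF : Bool
  allF : Bool

/-- Formulas over a relational signature `σ` (with arities `ar`) in the syntactic
fragment `F`, with `n` free variables (de Bruijn style, quantifiers bind the last
variable). Atomic relational formulas, conjunction and existential quantification
are always allowed; the other symbols only if enabled in `F`. -/
inductive Fml (σ : Type) (ar : σ → ℕ) (F : Frag) : ℕ → Type
  | rel {n : ℕ} (r : σ) (v : Fin (ar r) → Fin n) : Fml σ ar F n
  | equal {n : ℕ} (h : F.eq = true) (i j : Fin n) : Fml σ ar F n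
  | nequal {n : ℕ} (h : F.ne = true) (i j : Fin n) : Fml σ ar F n
  | fnot {n : ℕ} (h : F.neg = true) (φ : Fml σ ar F n) : Fml σ ar F n
  | fand {n : ℕ} (φ ψ : Fml σ ar F n) : Fml σ ar F n
  | forr {n : ℕ} (h : F.orF = true) (φ ψ : Fml σ ar F n) : Fml σ ar F n
  | fex {n : ℕ} (φ : Fml σ ar F (n + 1)) : Fml σ ar F n
  | fall {n : ℕ} (h : F.allF = true) (φ : Fml σ ar F (n + 1)) : Fml σ ar F n

/-- Satisfaction of a formula in a structure with domain `A` and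
interpretation `I`, under a valuation of the free variables. -/
def Sat {σ : Type} {ar : σ → ℕ} {F : Frag} {A : Type}
    (I : ∀ r : σ, (Fin (ar r) → A) → Prop) :
    ∀ {n : ℕ}, Fml σ ar F n → (Fin n → A) → Prop
  | _, .rel r v, val => I r fun i => val (v i)
  | _, .equal _ i j, val => val i = val j
  | _, .nequal _ i j, val => val i ≠ val j
  | _, .fnot _ φ, val => ¬ Sat I φ val
  | _, .fand φ ψ, val => Sat I φ val ∧ Sat I ψ val
  | _, .forr _ φ ψ, val => Sat I φ val ∨ Sat I ψ val
  | _, .fex φ, val => ∃ a : A, Sat I φ (Fin.snoc val a)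
  | _, .fall _ φ, val => ∀ a : A, Sat I φ (Fin.snoc val a)

end MC

namespace MC

/-- `f : A → Set B` is a hyper-morphism from `(A, IA)` to `(B, IB)`:
it is total (nonempty images) and preserves all relations. -/
def IsHyperMorphism {σ : Type} {ar : σ → ℕ} {A B : Type}
    (IA : ∀ r : σ, (Fin (ar r) → A) → Prop)
    (IB : ∀ r : σ, (Fin (ar r) → B) → Prop) (f : A → Set B) : Prop :=
  (∀ a : A, (f a).Nonempty) ∧
  ∀ (r : σ) (t : Fin (ar r) → A), IA r t →
    ∀ s : Fin (ar r) → B, (∀ i, s i ∈ f (t i)) → IB r s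

/-- A hyper-operation `f : A → Set B` is surjective if every element of `B`
lies in the image of some element of `A`. -/
def HyperSurjective {A B : Type} (f : A → Set B) : Prop :=
  ∀ b : B, ∃ a : A, b ∈ f a

/-- A hyper-morphism is full if membership of images exactly reflects the relations. -/
def IsFull {σ : Type} {ar : σ → ℕ} {A B : Type}
    (IA : ∀ r : σ, (Fin (ar r) → A) → Prop)
    (IB : ∀ r : σ, (Fin (ar r) → B) → Prop) (f : A → Set B) : Prop :=
  ∀ (r : σ) (t : Fin (ar r) → A) (s : Fin (ar r) → B),
    (∀ i, s i ∈ f (t i)) → (IA r t ↔ IB r s)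

end MC

namespace MC

/-- The fragment {∃,∀,∧,∨}-FO: positive equality-free logic. -/
def posFrag : Frag := ⟨false, false, false, true, true⟩

end MC

namespace Fin

theorem snoc_rel_snoc {α β : Type} {R : α → β → Prop} {n : ℕ} {u : Fin n → α} {v : Fin n → β}
    (huv : ∀ i, R (u i) (v i)) {a : α} {b : β} (hab : R a b) :
    ∀ i, R (Fin.snoc (α := fun _ => α) u a i) (Fin.snoc (α := fun _ => β) v b i) :=
  Fin.lastCases (by simpa using hab) fun i => by simpa using huv i

theorem append_surjective_left {α : Type} {m n : ℕ} {u : Fin m → α}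
    (hu : Function.Surjective u) (v : Fin n → α) : Function.Surjective (Fin.append u v) :=
  fun a => let ⟨i, hi⟩ := hu a; ⟨Fin.castAdd n i, by rw [Fin.append_left, hi]⟩

theorem append_surjective_right {α : Type} {m n : ℕ} (u : Fin m → α) {v : Fin n → α}
    (hv : Function.Surjective v) : Function.Surjective (Fin.append u v) :=
  fun a => let ⟨i, hi⟩ := hv a; ⟨Fin.natAdd m i, by rw [Fin.append_right, hi]⟩

end Fin

namespace MC

namespace Fml

variable {σ : Type} {ar : σ → ℕ} {F : Frag}

def exs : ∀ {n : ℕ} (k : ℕ), Fml σ ar F (n + k) → Fml σ ar F n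
  | _, 0, φ => φ
  | _, k + 1, φ => exs k (.fex φ)

def alls (h : F.allF = true) : ∀ {n : ℕ} (k : ℕ), Fml σ ar F (n + k) → Fml σ ar F n
  | _, 0, φ => φ
  | _, k + 1, φ => alls h k (.fall h φ)

-- The fragment has no `⊤`/`⊥`, so the index type must be nonempty to supply the innermost term.
noncomputable def iInf {n : ℕ} {ι : Type} [Finite ι] [Nonempty ι] (g : ι → Fml σ ar F n) :
    Fml σ ar F n :=
  letI := Fintype.ofFinite ι
  (Finset.univ.toList.map g).foldr .fand (g (Classical.arbitrary ι))

noncomputable def iSup (h : F.orF = true) {n : ℕ} {ι : Type} [Finite ι] [Nonempty ι]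
    (g : ι → Fml σ ar F n) : Fml σ ar F n :=
  letI := Fintype.ofFinite ι
  (Finset.univ.toList.map g).foldr (.forr h) (g (Classical.arbitrary ι))

end Fml

section Sat

variable {σ : Type} {ar : σ → ℕ} {F : Frag} {D : Type} (I : ∀ r : σ, (Fin (ar r) → D) → Prop)

theorem sat_foldr_fand {n : ℕ} (φ : Fml σ ar F n) (l : List (Fml σ ar F n)) (val : Fin n → D) :
    Sat I (l.foldr .fand φ) val ↔ Sat I φ val ∧ ∀ ψ ∈ l, Sat I ψ val := by
  induction l with
  | nil => simp
  | cons ψ l ih => simp only [List.foldr_cons, Sat, ih, List.forall_mem_cons]; tauto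

theorem sat_foldr_forr (h : F.orF = true) {n : ℕ} (φ : Fml σ ar F n) (l : List (Fml σ ar F n))
    (val : Fin n → D) :
    Sat I (l.foldr (.forr h) φ) val ↔ Sat I φ val ∨ ∃ ψ ∈ l, Sat I ψ val := by
  induction l with
  | nil => simp
  | cons ψ l ih => simp only [List.foldr_cons, Sat, ih, List.exists_mem_cons_iff]; tauto

theorem sat_iInf {n : ℕ} {ι : Type} [Finite ι] [Nonempty ι] (g : ι → Fml σ ar F n)
    (val : Fin n → D) : Sat I (Fml.iInf g) val ↔ ∀ i, Sat I (g i) val := by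
  let := Fintype.ofFinite ι
  simp only [Fml.iInf, sat_foldr_fand, List.forall_mem_map, Finset.mem_toList, Finset.mem_univ,
    true_implies]
  exact and_iff_right_of_imp fun h => h _

theorem sat_iSup (h : F.orF = true) {n : ℕ} {ι : Type} [Finite ι] [Nonempty ι]
    (g : ι → Fml σ ar F n) (val : Fin n → D) :
    Sat I (Fml.iSup h g) val ↔ ∃ i, Sat I (g i) val := by
  let := Fintype.ofFinite ι
  simp only [Fml.iSup, sat_foldr_forr, List.mem_map, Finset.mem_toList, Finset.mem_univ, true_and,
    exists_exists_eq_and]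
  exact or_iff_right_of_imp fun h => ⟨_, h⟩

theorem sat_exs {n : ℕ} (k : ℕ) (φ : Fml σ ar F (n + k)) (val : Fin n → D) :
    Sat I (Fml.exs k φ) val ↔ ∃ e : Fin k → D, Sat I φ (Fin.append val e) := by
  induction k with
  | zero => simp only [Fml.exs, Fin.append_right_nil _ _ rfl, exists_const]; rfl
  | succ k ih =>
    simp only [Fml.exs, ih, Sat, ← Fin.append_snoc]
    exact ⟨fun ⟨e, a, h⟩ => ⟨_, h⟩,
      fun ⟨e, h⟩ => ⟨Fin.init e, e (Fin.last k), by rwa [Fin.snoc_init_self]⟩⟩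

theorem sat_alls (h : F.allF = true) {n : ℕ} (k : ℕ) (φ : Fml σ ar F (n + k))
    (val : Fin n → D) :
    Sat I (Fml.alls h k φ) val ↔ ∀ e : Fin k → D, Sat I φ (Fin.append val e) := by
  induction k with
  | zero => simp only [Fml.alls, Fin.append_right_nil _ _ rfl, forall_const]; rfl
  | succ k ih =>
    simp only [Fml.alls, ih, Sat, ← Fin.append_snoc]
    exact ⟨fun h e => by simpa only [Fin.snoc_init_self] using h (Fin.init e) (e (Fin.last k)),
      fun h e a => h _⟩

end Sat

section Preservation

variable {σ : Type} {ar : σ → ℕ} {F : Frag} {A B : Type}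
  (IA : ∀ r : σ, (Fin (ar r) → A) → Prop) (IB : ∀ r : σ, (Fin (ar r) → B) → Prop)

theorem sat_of_isHyperMorphism {f : A → Set B} (hf : IsHyperMorphism IA IB f)
    (hs : HyperSurjective f) (heq : F.eq = false) (hne : F.ne = false) (hneg : F.neg = false)
    {n : ℕ} (φ : Fml σ ar F n) {vA : Fin n → A} {vB : Fin n → B} (hv : ∀ i, vB i ∈ f (vA i)) :
    Sat IA φ vA → Sat IB φ vB := by
  induction φ with
  | rel r v => exact fun h => hf.2 r _ h _ fun i => hv (v i)
  | equal h => simp [heq] at h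
  | nequal h => simp [hne] at h
  | fnot h => simp [hneg] at h
  | fand φ ψ ihφ ihψ => exact fun h => ⟨ihφ hv h.1, ihψ hv h.2⟩
  | forr _ φ ψ ihφ ihψ => exact Or.imp (ihφ hv) (ihψ hv)
  | fex φ ih =>
    rintro ⟨a, ha⟩
    obtain ⟨b, hb⟩ := hf.1 a
    exact ⟨b, ih (Fin.snoc_rel_snoc (R := fun a b => b ∈ f a) hv hb) ha⟩
  | fall _ φ ih =>
    intro h b
    obtain ⟨a, hb⟩ := hs b
    exact ih (Fin.snoc_rel_snoc (R := fun a b => b ∈ f a) hv hb) (h a)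

end Preservation

section Diagram

variable {σ : Type} {ar : σ → ℕ} {A : Type} (IA : ∀ r : σ, (Fin (ar r) → A) → Prop)

abbrev TrueAtom {n : ℕ} (ρ : Fin n → A) : Type :=
  {p : Σ r : σ, Fin (ar r) → Fin n // IA p.1 (ρ ∘ p.2)}

theorem TrueAtom.nonempty {n : ℕ} {ρ : Fin n → A} (hρ : Function.Surjective ρ)
    (hA : ∃ r t, IA r t) : Nonempty (TrueAtom IA ρ) := by
  obtain ⟨r, t, ht⟩ := hA
  refine ⟨⟨⟨r, Function.surjInv hρ ∘ t⟩, ?_⟩⟩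
  rwa [← Function.comp_assoc, (Function.rightInverse_surjInv hρ).comp_eq_id]

variable [Finite σ]

noncomputable def Fml.diagram {F : Frag} {n : ℕ} (ρ : Fin n → A) [Nonempty (TrueAtom IA ρ)] :
    Fml σ ar F n :=
  Fml.iInf fun p : TrueAtom IA ρ => .rel p.1.1 p.1.2

theorem sat_diagram {F : Frag} {D : Type} (I : ∀ r : σ, (Fin (ar r) → D) → Prop) {n : ℕ}
    (ρ : Fin n → A) [Nonempty (TrueAtom IA ρ)] (val : Fin n → D) :
    Sat I (Fml.diagram (F := F) IA ρ) val ↔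
      ∀ r (v : Fin (ar r) → Fin n), IA r (ρ ∘ v) → I r (val ∘ v) := by
  simp only [Fml.diagram, sat_iInf, Subtype.forall, Sigma.forall]
  rfl

end Diagram

section HyperFromValuations

variable {σ : Type} {ar : σ → ℕ} {A B : Type}
  (IA : ∀ r : σ, (Fin (ar r) → A) → Prop) (IB : ∀ r : σ, (Fin (ar r) → B) → Prop)
  {n : ℕ} {ρ : Fin n → A} {τ : Fin n → B}

theorem isHyperMorphism_image_preimage (hρ : Function.Surjective ρ)
    (h : ∀ r (v : Fin (ar r) → Fin n), IA r (ρ ∘ v) → IB r (τ ∘ v)) :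
    IsHyperMorphism IA IB fun a => τ '' (ρ ⁻¹' {a}) := by
  refine ⟨fun a => ?_, fun r t ht s hs => ?_⟩
  · obtain ⟨k, hk⟩ := hρ a
    exact ⟨τ k, k, hk, rfl⟩
  · choose v hvρ hvτ using hs
    have hρv : ρ ∘ v = t := funext hvρ
    have hτv : τ ∘ v = s := funext hvτ
    exact hτv ▸ h r v (hρv ▸ ht)

theorem hyperSurjective_image_preimage (hτ : Function.Surjective τ) :
    HyperSurjective fun a => τ '' (ρ ⁻¹' {a}) := fun b => by
  obtain ⟨k, hk⟩ := hτ b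
  exact ⟨ρ k, k, rfl, hk⟩

theorem isHyperMorphism_univ [Nonempty B] (hA : ∀ r t, ¬ IA r t) :
    IsHyperMorphism IA IB fun _ => Set.univ :=
  ⟨fun _ => Set.univ_nonempty, fun r t ht => (hA r t ht).elim⟩

theorem hyperSurjective_univ [Nonempty A] : HyperSurjective fun _ : A => (Set.univ : Set B) :=
  fun _ => ⟨Classical.arbitrary A, trivial⟩

end HyperFromValuations

section Canonical

theorem posFrag_allF : posFrag.allF = true := rfl

theorem posFrag_orF : posFrag.orF = true := rfl

variable {A : Type} [Finite A]

noncomputable def canonicalValuation {k : ℕ} (g : Fin k → A) : Fin (0 + k + Nat.card A) → A :=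
  Fin.append (Fin.append Fin.elim0 g) (Finite.equivFin A).symm

theorem canonicalValuation_surjective {k : ℕ} (g : Fin k → A) :
    Function.Surjective (canonicalValuation g) :=
  Fin.append_surjective_right _ (Finite.equivFin A).symm.surjective

variable {σ : Type} [Finite σ] {ar : σ → ℕ} [Nonempty A]
  (IA : ∀ r : σ, (Fin (ar r) → A) → Prop) (hA : ∃ r t, IA r t)

noncomputable def canonicalSentence (k : ℕ) : Fml σ ar posFrag 0 :=
  Fml.alls posFrag_allF k <| Fml.exs (Nat.card A) <| Fml.iSup posFrag_orF fun g : Fin k → A =>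
    haveI := TrueAtom.nonempty IA (canonicalValuation_surjective g) hA
    Fml.diagram IA (canonicalValuation g)

theorem sat_canonicalSentence (k : ℕ) : Sat IA (canonicalSentence IA hA k) Fin.elim0 := by
  rw [canonicalSentence, sat_alls]
  intro g
  rw [sat_exs]
  have := TrueAtom.nonempty IA (canonicalValuation_surjective g) hA
  exact ⟨_, (sat_iSup _ _ _ _).2 ⟨g, (sat_diagram _ _ _ _).2 fun r v h => h⟩⟩

theorem exists_surjective_hyper_of_sat_canonicalSentence {B : Type} [Finite B]
    (IB : ∀ r : σ, (Fin (ar r) → B) → Prop)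
    (h : Sat IB (canonicalSentence IA hA (Nat.card B)) Fin.elim0) :
    ∃ f : A → Set B, IsHyperMorphism IA IB f ∧ HyperSurjective f := by
  rw [canonicalSentence, sat_alls] at h
  obtain ⟨xs, hxs⟩ := (sat_exs _ _ _ _).1 (h (Finite.equivFin B).symm)
  obtain ⟨g, hg⟩ := (sat_iSup _ _ _ _).1 hxs
  have := TrueAtom.nonempty IA (canonicalValuation_surjective g) hA
  have hτ := Fin.append_surjective_left
    (Fin.append_surjective_right Fin.elim0 (Finite.equivFin B).symm.surjective) xs
  exact ⟨_, isHyperMorphism_image_preimage IA IB (canonicalValuation_surjective g)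
    ((sat_diagram _ _ _ _).1 hg), hyperSurjective_image_preimage hτ⟩

end Canonical

/-- {∃,∀,∧,∨}-FO containment is characterised by surjective hyper-morphism. -/
theorem pos_containment_iff_surjective_hyper {σ : Type} [Finite σ] (ar : σ → ℕ)
    {A B : Type} [Finite A] [Finite B] [Nonempty A] [Nonempty B]
    (IA : ∀ r : σ, (Fin (ar r) → A) → Prop)
    (IB : ∀ r : σ, (Fin (ar r) → B) → Prop) :
    (∀ φ : Fml σ ar posFrag 0, Sat IA φ Fin.elim0 → Sat IB φ Fin.elim0) ↔
      ∃ f : A → Set B, IsHyperMorphism IA IB f ∧ HyperSurjective f := by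
  refine ⟨fun hcont => ?_, fun ⟨f, hf, hs⟩ φ =>
    sat_of_isHyperMorphism IA IB hf hs rfl rfl rfl φ fun i => i.elim0⟩
  by_cases hA : ∃ r t, IA r t
  · exact exists_surjective_hyper_of_sat_canonicalSentence IA hA IB
      (hcont _ (sat_canonicalSentence IA hA _))
  · simp only [not_exists] at hA
    exact ⟨_, isHyperMorphism_univ IA IB hA, hyperSurjective_univ⟩

end MC
end

section
/- Let D be a finite set, M a DSM on D, and U, X ⊆ D such that M contains a U-surjective shop and an X-total shop, |U| is minimal among cardinalities of subsets U' of D such that M contains a U'-surjective shop, |X| is minimal among cardinalities of subsets X' of D such that M contains an X'-total shop, and, subject to these minimality conditions, |U ∩ X| is maximal. Then there exists a U-X-shop h ∈ M with the following properties: (i) for every y ∈ U ∩ X, h(y) ∩ (U ∪ X) = {y}; (ii) for every x ∈ X \ U, h(x) ∩ (U ∪ X) = {x}; (iii) for every u ∈ U \ X, h(u) ∩ (U ∪ X) = {u} ∪ X_u for some set X_u ⊆ X \ U; (iv) ⋃_{u ∈ U \ X} X_u = X \ U, i.e. h(U \ X) ∩ X = X \ U. -/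
namespace MC

/-- A shop (surjective hyper-operation) on `D`: a total and surjective
hyper-operation `D → Set D`. -/
structure Shop (D : Type) where
  f : D → Set D
  total : ∀ a : D, (f a).Nonempty
  surj : ∀ b : D, ∃ a : D, b ∈ f a

variable {D : Type}

/-- Composition of shops: `(comp g f) x = g (f x)`. -/
def Shop.comp (g f : Shop D) : Shop D where
  f := fun x => {z | ∃ y ∈ f.f x, z ∈ g.f y}
  total := by
    intro a
    obtain ⟨y, hy⟩ := f.total a
    obtain ⟨z, hz⟩ := g.total y
    exact ⟨z, y, hy, hz⟩
  surj := by
    intro b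
    obtain ⟨y, hy⟩ := g.surj b
    obtain ⟨x, hx⟩ := f.surj y
    exact ⟨x, y, hx, hy⟩

/-- The identity shop `x ↦ {x}`. -/
def Shop.id : Shop D where
  f := fun x => {x}
  total := fun a => ⟨a, rfl⟩
  surj := fun b => ⟨b, rfl⟩

/-- Iterates of a shop: `pow f 0 = id` and `pow f (n+1) = f ∘ (pow f n)`. -/
def Shop.pow (f : Shop D) : ℕ → Shop D
  | 0 => Shop.id
  | n + 1 => Shop.comp f (f.pow n)

/-- `f` is `U`-surjective (a `U`-shop): `f(U) = D`. -/
def Shop.USurj (f : Shop D) (U : Set D) : Prop :=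
  ∀ b : D, ∃ u ∈ U, b ∈ f.f u

/-- `f` is `X`-total (an `X`-shop): `f⁻¹(X) = D`. -/
def Shop.XTotal (f : Shop D) (X : Set D) : Prop :=
  ∀ a : D, ∃ x ∈ X, x ∈ f.f a

end MC

namespace MC

/-- A down-shop-monoid (DSM): a set of shops containing the identity shop,
closed under composition, and closed under sub-shops. -/
def IsDSM {D : Type} (M : Set (Shop D)) : Prop :=
  Shop.id ∈ M ∧
  (∀ f ∈ M, ∀ g ∈ M, Shop.comp g f ∈ M) ∧
  ∀ f ∈ M, ∀ g : Shop D, (∀ x : D, g.f x ⊆ f.f x) → g ∈ M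

end MC

namespace MC

variable {D : Type}

private lemma pow_mem {M : Set (Shop D)} (hM : IsDSM M) {h : Shop D} (hh : h ∈ M) :
    ∀ n, h.pow n ∈ M
  | 0 => hM.1
  | n + 1 => hM.2.1 _ (pow_mem hM hh n) _ hh

private lemma comp_USurj {g h : Shop D} {U : Set D} (hU : h.USurj U) :
    (Shop.comp g h).USurj U := by
  intro b
  obtain ⟨a, ha⟩ := g.surj b
  obtain ⟨u, hu, hau⟩ := hU a
  exact ⟨u, hu, a, hau, ha⟩

private lemma comp_XTotal {g h : Shop D} {X : Set D} (hg : g.XTotal X) :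
    (Shop.comp g h).XTotal X := by
  intro a
  obtain ⟨y, hy⟩ := h.total a
  obtain ⟨x, hx, hxy⟩ := hg y
  exact ⟨x, hx, y, hy, hxy⟩

private lemma pow_USurj {h : Shop D} {U : Set D} (hU : h.USurj U) :
    ∀ n, (h.pow (n + 1)).USurj U
  | 0 => by
      intro b
      obtain ⟨u, hu, hb⟩ := hU b
      exact ⟨u, hu, u, rfl, hb⟩
  | n + 1 => comp_USurj (pow_USurj hU n)

private lemma pow_XTotal {h : Shop D} {X : Set D} (hX : h.XTotal X) (n : ℕ) :
    (h.pow (n + 1)).XTotal X :=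
  comp_XTotal hX

private lemma comp_congr {g f₁ f₂ : Shop D} (hf : f₁.f = f₂.f) :
    (Shop.comp g f₁).f = (Shop.comp g f₂).f := by
  funext x
  show {z | ∃ y ∈ f₁.f x, z ∈ g.f y} = {z | ∃ y ∈ f₂.f x, z ∈ g.f y}
  rw [hf]

private lemma pow_add_f (h : Shop D) :
    ∀ m n, (h.pow (m + n)).f = (Shop.comp (h.pow m) (h.pow n)).f
  | 0, n => by
      rw [Nat.zero_add]
      funext x
      ext z
      constructor
      · intro hz; exact ⟨z, hz, rfl⟩
      · rintro ⟨y, hy, hz⟩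
        have hzy : z = y := hz
        rw [hzy]; exact hy
  | m + 1, n => by
      have hmn : m + 1 + n = (m + n) + 1 := by omega
      rw [hmn]
      show (Shop.comp h (h.pow (m + n))).f = (Shop.comp (Shop.comp h (h.pow m)) (h.pow n)).f
      funext x
      ext z
      constructor
      · rintro ⟨y, hy, hz⟩
        rw [pow_add_f h m n] at hy
        obtain ⟨w, hw, hyw⟩ := hy
        exact ⟨w, hw, y, hyw, hz⟩
      · rintro ⟨w, hw, y, hyw, hz⟩
        refine ⟨y, ?_, hz⟩
        rw [pow_add_f h m n]
        exact ⟨w, hw, hyw⟩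

private lemma exists_idempotent_pow [Finite D] (h : Shop D) :
    ∃ k, 1 ≤ k ∧ (h.pow (k + k)).f = (h.pow k).f := by
  obtain ⟨i₀, j₀, hne, heq⟩ := Finite.exists_ne_map_eq_of_infinite (fun n => (h.pow n).f)
  obtain ⟨i, j, hij, hfe⟩ : ∃ i j : ℕ, i < j ∧ (h.pow i).f = (h.pow j).f := by
    rcases lt_or_gt_of_ne hne with hlt | hlt
    · exact ⟨i₀, j₀, hlt, heq⟩
    · exact ⟨j₀, i₀, hlt, heq.symm⟩
  set p := j - i with hpdef
  have hp1 : 1 ≤ p := by omega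
  have step : ∀ t, (h.pow (i + t)).f = (h.pow (i + t + p)).f := by
    intro t
    have h1 := pow_add_f h t i
    have h2 := pow_add_f h t j
    have e1 : i + t = t + i := by omega
    have e2 : t + i + p = t + j := by omega
    rw [e1, h1, e2, h2, comp_congr (g := h.pow t) hfe]
  have rep : ∀ c t, (h.pow (i + t)).f = (h.pow (i + t + c * p)).f := by
    intro c
    induction c with
    | zero => simp
    | succ c ih =>
      intro t
      have hst := step (t + c * p)
      have e3 : i + (t + c * p) = i + t + c * p := by omega
      have e4 : i + t + c * p + p = i + t + (c + 1) * p := by ring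
      rw [e3, e4] at hst
      rw [ih t, hst]
  have hk1 : 1 ≤ (i + 1) * p := Nat.one_le_iff_ne_zero.mpr (by positivity)
  have hki : i ≤ (i + 1) * p := by
    calc i ≤ (i + 1) * 1 := by omega
    _ ≤ (i + 1) * p := Nat.mul_le_mul_left _ hp1
  refine ⟨(i + 1) * p, hk1, ?_⟩
  obtain ⟨t, ht⟩ : ∃ t, (i + 1) * p = i + t := ⟨(i + 1) * p - i, by omega⟩
  have hrep := rep (i + 1) t
  rw [← ht] at hrep
  exact hrep.symm

private lemma walk_total {e : Shop D} [Finite D]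
    (P : ∀ x y z : D, y ∈ e.f x → z ∈ e.f y → z ∈ e.f x)
    {X : Set D} (hX : e.XTotal X) (a : D) :
    ∃ x ∈ X, x ∈ e.f x ∧ x ∈ e.f a := by
  choose σ hσX hσf using hX
  set s : ℕ → D := fun n => σ^[n] (σ a) with hs
  have hsucc : ∀ n, s (n + 1) = σ (s n) := by
    intro n
    simp only [hs]
    exact Function.iterate_succ_apply' σ n (σ a)
  have hsX : ∀ n, s n ∈ X := by
    intro n
    induction n with
    | zero => exact hσX a
    | succ n ih => rw [hsucc]; exact hσX _
  have hstep : ∀ n, s (n + 1) ∈ e.f (s n) := by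
    intro n
    rw [hsucc]
    exact hσf (s n)
  have hsa : ∀ n, s n ∈ e.f a := by
    intro n
    induction n with
    | zero => exact hσf a
    | succ n ih => exact P a (s n) (s (n + 1)) ih (hstep n)
  have hchain : ∀ n m, m < n → s n ∈ e.f (s m) := by
    intro n
    induction n with
    | zero => omega
    | succ n ih =>
      intro m hmn
      rcases Nat.lt_or_ge m n with h' | h'
      · exact P (s m) (s n) (s (n + 1)) (ih m h') (hstep n)
      · have hm : m = n := by omega
        rw [hm]; exact hstep n
  obtain ⟨m₀, n₀, hne, heq⟩ := Finite.exists_ne_map_eq_of_infinite s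
  obtain ⟨m, n, hmn, heq'⟩ : ∃ m n : ℕ, m < n ∧ s m = s n := by
    rcases lt_or_gt_of_ne hne with hlt | hlt
    · exact ⟨m₀, n₀, hlt, heq⟩
    · exact ⟨n₀, m₀, hlt, heq.symm⟩
  refine ⟨s m, hsX m, ?_, hsa m⟩
  have := hchain n m hmn
  rwa [← heq'] at this

private lemma walk_surj {e : Shop D} [Finite D]
    (P : ∀ x y z : D, y ∈ e.f x → z ∈ e.f y → z ∈ e.f x)
    {U : Set D} (hU : e.USurj U) (b : D) :
    ∃ u ∈ U, u ∈ e.f u ∧ b ∈ e.f u := by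
  choose τ hτU hτf using hU
  set s : ℕ → D := fun n => τ^[n] (τ b) with hs
  have hsucc : ∀ n, s (n + 1) = τ (s n) := by
    intro n
    simp only [hs]
    exact Function.iterate_succ_apply' τ n (τ b)
  have hsU : ∀ n, s n ∈ U := by
    intro n
    induction n with
    | zero => exact hτU b
    | succ n ih => rw [hsucc]; exact hτU _
  have hstep : ∀ n, s n ∈ e.f (s (n + 1)) := by
    intro n
    rw [hsucc]
    exact hτf (s n)
  have hsb : ∀ n, b ∈ e.f (s n) := by
    intro n
    induction n with
    | zero => exact hτf b
    | succ n ih => exact P (s (n + 1)) (s n) b (hstep n) ih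
  have hchain : ∀ n m, m < n → s m ∈ e.f (s n) := by
    intro n
    induction n with
    | zero => omega
    | succ n ih =>
      intro m hmn
      rcases Nat.lt_or_ge m n with h' | h'
      · exact P (s (n + 1)) (s n) (s m) (hstep n) (ih m h')
      · have hm : m = n := by omega
        rw [hm]; exact hstep n
  obtain ⟨m₀, n₀, hne, heq⟩ := Finite.exists_ne_map_eq_of_infinite s
  obtain ⟨m, n, hmn, heq'⟩ : ∃ m n : ℕ, m < n ∧ s m = s n := by
    rcases lt_or_gt_of_ne hne with hlt | hlt
    · exact ⟨m₀, n₀, hlt, heq⟩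
    · exact ⟨n₀, m₀, hlt, heq.symm⟩
  refine ⟨s m, hsU m, ?_, hsb m⟩
  have := hchain n m hmn
  rwa [← heq'] at this

end MC

namespace MC

/-- In a DSM with minimal witnessing sets `U`, `X` (and maximal intersection),
there is a canonical `U`-`X`-shop `h` in the DSM fixing `U ∩ X` and `X \ U`
inside `U ∪ X`, and such that elements of `U \ X` cover `X \ U`. -/
theorem exists_canonical_UXshop {D : Type} [Finite D]
    (M : Set (Shop D)) (hM : IsDSM M) (U X : Set D)
    (hU : ∃ f ∈ M, f.USurj U) (hX : ∃ f ∈ M, f.XTotal X)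
    (hUmin : ∀ U' : Set D, (∃ f ∈ M, f.USurj U') → U.ncard ≤ U'.ncard)
    (hXmin : ∀ X' : Set D, (∃ f ∈ M, f.XTotal X') → X.ncard ≤ X'.ncard)
    (hmax : ∀ U' X' : Set D, (∃ f ∈ M, f.USurj U') → (∃ f ∈ M, f.XTotal X') →
      U'.ncard = U.ncard → X'.ncard = X.ncard →
      (U' ∩ X').ncard ≤ (U ∩ X).ncard) :
    ∃ h ∈ M, h.USurj U ∧ h.XTotal X ∧
      (∀ y ∈ U ∩ X, h.f y ∩ (U ∪ X) = {y}) ∧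
      (∀ x ∈ X \ U, h.f x ∩ (U ∪ X) = {x}) ∧
      (∃ Xu : D → Set D,
        (∀ u ∈ U \ X, Xu u ⊆ X \ U ∧ h.f u ∩ (U ∪ X) = insert u (Xu u)) ∧
        (⋃ u ∈ U \ X, Xu u) = X \ U) ∧
      (⋃ u ∈ U \ X, h.f u) ∩ X = X \ U := by
  classical
  obtain ⟨f, hfM, hfU⟩ := hU
  obtain ⟨g, hgM, hgX⟩ := hX
  have hh0M : Shop.comp g f ∈ M := hM.2.1 f hfM g hgM
  have hh0U : (Shop.comp g f).USurj U := comp_USurj hfU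
  have hh0X : (Shop.comp g f).XTotal X := comp_XTotal hgX
  obtain ⟨k, hk1, hkidem⟩ := exists_idempotent_pow (Shop.comp g f)
  obtain ⟨k', rfl⟩ : ∃ k', k = k' + 1 := ⟨k - 1, by omega⟩
  set e : Shop D := (Shop.comp g f).pow (k' + 1) with he
  have heM : e ∈ M := pow_mem hM hh0M _
  have heU : e.USurj U := pow_USurj hh0U k'
  have heX : e.XTotal X := pow_XTotal hh0X k'
  have P : ∀ x y z : D, y ∈ e.f x → z ∈ e.f y → z ∈ e.f x := by
    intro x y z hy hz
    have h1 := pow_add_f (Shop.comp g f) (k' + 1) (k' + 1)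
    have hmem : z ∈ (Shop.comp e e).f x := ⟨y, hy, hz⟩
    rw [he, ← h1, hkidem] at hmem
    exact hmem
  -- every x ∈ X satisfies x ∈ e.f x
  have hXfix : ∀ x ∈ X, x ∈ e.f x := by
    have hXT : e.XTotal {x | x ∈ X ∧ x ∈ e.f x} := by
      intro a
      obtain ⟨x, hx, hxx, hxa⟩ := walk_total P heX a
      exact ⟨x, ⟨hx, hxx⟩, hxa⟩
    have hle := hXmin _ ⟨e, heM, hXT⟩
    have hsub : {x | x ∈ X ∧ x ∈ e.f x} ⊆ X := fun x hx => hx.1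
    have heqX := Set.eq_of_subset_of_ncard_le hsub hle
    intro x hx
    have hx' : x ∈ {x | x ∈ X ∧ x ∈ e.f x} := by rw [heqX]; exact hx
    exact hx'.2
  -- every u ∈ U satisfies u ∈ e.f u
  have hUfix : ∀ u ∈ U, u ∈ e.f u := by
    have hUS : e.USurj {u | u ∈ U ∧ u ∈ e.f u} := by
      intro b
      obtain ⟨u, hu, huu, hbu⟩ := walk_surj P heU b
      exact ⟨u, ⟨hu, huu⟩, hbu⟩
    have hle := hUmin _ ⟨e, heM, hUS⟩
    have hsub : {u | u ∈ U ∧ u ∈ e.f u} ⊆ U := fun u hu => hu.1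
    have heqU := Set.eq_of_subset_of_ncard_le hsub hle
    intro u hu
    have hu' : u ∈ {u | u ∈ U ∧ u ∈ e.f u} := by rw [heqU]; exact hu
    exact hu'.2
  -- X-injectivity
  have hXinj : ∀ x ∈ X, ∀ x' ∈ X, x' ∈ e.f x → x' = x := by
    intro x hx x' hx' hmem
    by_contra hne
    have hXT : e.XTotal (X \ {x}) := by
      intro a
      obtain ⟨y, hy, hya⟩ := heX a
      by_cases hyx : y = x
      · exact ⟨x', ⟨hx', by simpa using hne⟩,
          P a y x' hya (by rw [hyx]; exact hmem)⟩
      · exact ⟨y, ⟨hy, by simpa using hyx⟩, hya⟩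
    have hle := hXmin _ ⟨e, heM, hXT⟩
    have hlt : (X \ {x}).ncard < X.ncard := Set.ncard_diff_singleton_lt_of_mem hx
    omega
  -- U-injectivity
  have hUinj : ∀ u ∈ U, ∀ u' ∈ U, u' ∈ e.f u → u' = u := by
    intro u hu u' hu' hmem
    by_contra hne
    have hUS : e.USurj (U \ {u'}) := by
      intro b
      obtain ⟨v, hv, hb⟩ := heU b
      by_cases hvu : v = u'
      · exact ⟨u, ⟨hu, by simpa using fun h => hne h.symm⟩,
          P u u' b hmem (by rw [← hvu]; exact hb)⟩
      · exact ⟨v, ⟨hv, by simpa using hvu⟩, hb⟩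
    have hle := hUmin _ ⟨e, heM, hUS⟩
    have hlt : (U \ {u'}).ncard < U.ncard := Set.ncard_diff_singleton_lt_of_mem hu'
    omega
  -- for x ∈ X \ U, e.f x contains no element of U
  have hXU : ∀ x ∈ X, x ∉ U → ∀ u ∈ U, u ∉ e.f x := by
    intro x hxX hxU u huU hmem
    have huX : u ∉ X := by
      intro huXmem
      have := hXinj x hxX u huXmem hmem
      rw [this] at huU
      exact hxU huU
    have hUS : e.USurj (insert x (U \ {u})) := by
      intro b
      obtain ⟨v, hv, hb⟩ := heU b
      by_cases hvu : v = u
      · exact ⟨x, Set.mem_insert _ _, P x u b hmem (by rw [← hvu]; exact hb)⟩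
      · exact ⟨v, Set.mem_insert_of_mem _ ⟨hv, by simpa using hvu⟩, hb⟩
    have hxnm : x ∉ U \ {u} := fun hc => hxU hc.1
    have hcard : (insert x (U \ {u})).ncard = U.ncard := by
      rw [Set.ncard_insert_of_notMem hxnm]
      exact Set.ncard_diff_singleton_add_one huU
    have hinter : insert x (U \ {u}) ∩ X = insert x (U ∩ X) := by
      ext z
      simp only [Set.mem_inter_iff, Set.mem_insert_iff, Set.mem_diff,
        Set.mem_singleton_iff]
      constructor
      · rintro ⟨hz | ⟨hzU, hzu⟩, hzX⟩
        · exact Or.inl hz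
        · exact Or.inr ⟨hzU, hzX⟩
      · rintro (rfl | ⟨hzU, hzX⟩)
        · exact ⟨Or.inl rfl, hxX⟩
        · refine ⟨Or.inr ⟨hzU, ?_⟩, hzX⟩
          rintro rfl
          exact huX hzX
    have hxUX : x ∉ U ∩ X := fun hc => hxU hc.1
    have hlt : (U ∩ X).ncard < (insert x (U \ {u}) ∩ X).ncard := by
      rw [hinter, Set.ncard_insert_of_notMem hxUX]
      omega
    have := hmax _ X ⟨e, heM, hUS⟩ ⟨e, heM, heX⟩ hcard rfl
    omega
  refine ⟨e, heM, heU, heX, ?_, ?_, ?_, ?_⟩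
  · intro y hy
    ext z
    simp only [Set.mem_inter_iff, Set.mem_union, Set.mem_singleton_iff]
    constructor
    · rintro ⟨hz, hzU | hzX⟩
      · exact hUinj y hy.1 z hzU hz
      · exact hXinj y hy.2 z hzX hz
    · rintro rfl
      exact ⟨hXfix z hy.2, Or.inl hy.1⟩
  · intro x hx
    ext z
    simp only [Set.mem_inter_iff, Set.mem_union, Set.mem_singleton_iff]
    constructor
    · rintro ⟨hz, hzU | hzX⟩
      · exact absurd hz (hXU x hx.1 hx.2 z hzU)
      · exact hXinj x hx.1 z hzX hz
    · rintro rfl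
      exact ⟨hXfix z hx.1, Or.inr hx.1⟩
  · refine ⟨fun u => e.f u ∩ X, ?_, ?_⟩
    · intro u hu
      constructor
      · rintro z ⟨hzf, hzX⟩
        refine ⟨hzX, fun hzU => ?_⟩
        have hz := hUinj u hu.1 z hzU hzf
        rw [hz] at hzX
        exact hu.2 hzX
      · ext z
        simp only [Set.mem_inter_iff, Set.mem_union, Set.mem_insert_iff]
        constructor
        · rintro ⟨hz, hzU | hzX⟩
          · exact Or.inl (hUinj u hu.1 z hzU hz)
          · exact Or.inr ⟨hz, hzX⟩
        · rintro (rfl | ⟨hz, hzX⟩)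
          · exact ⟨hUfix z hu.1, Or.inl hu.1⟩
          · exact ⟨hz, Or.inr hzX⟩
    · ext z
      simp only [Set.mem_iUnion, Set.mem_inter_iff, Set.mem_diff, exists_prop]
      constructor
      · rintro ⟨u, ⟨huU, huX⟩, hzf, hzX⟩
        refine ⟨hzX, fun hzU => ?_⟩
        have hz := hUinj u huU z hzU hzf
        rw [hz] at hzX
        exact huX hzX
      · rintro ⟨hzX, hzU⟩
        obtain ⟨u, huU, hzf⟩ := heU z
        have huX : u ∉ X := by
          intro huXmem
          have := hXinj u huXmem z hzX hzf
          rw [← this] at huU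
          exact hzU huU
        exact ⟨u, ⟨huU, huX⟩, hzf, hzX⟩
  · ext z
    simp only [Set.mem_inter_iff, Set.mem_iUnion, Set.mem_diff, exists_prop]
    constructor
    · rintro ⟨⟨u, ⟨huU, huX⟩, hzf⟩, hzX⟩
      refine ⟨hzX, fun hzU => ?_⟩
      have hz := hUinj u huU z hzU hzf
      rw [hz] at hzX
      exact huX hzX
    · rintro ⟨hzX, hzU⟩
      obtain ⟨u, huU, hzf⟩ := heU z
      have huX : u ∉ X := by
        intro huXmem
        have := hXinj u huXmem z hzX hzf
        rw [← this] at huU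
        exact hzU huU
      exact ⟨⟨u, ⟨huU, huX⟩, hzf⟩, hzX⟩

end MC
end
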